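/- arXiv:1206.0487 — 3 statements merged into one kernel-verified Lean document; each statement's English description precedes it below -/
import Mathlib

section
/- Let r > 0 and k ≥ 1 be a natural number. Let λ : ℕ → ℂ be a sequence of nonzero complex numbers with |λ_n| → ∞, let m : ℕ → ℕ, and let coefficients c_{n,η} ∈ ℂ be given for 0 ≤ η ≤ m_n; write M_n = max_{0≤η≤m_n} |c_{n,η}|. Assume that ∑_n M_n · B(r, λ_n, k, m_n) · (|λ_n| + 1)^k · e^{r·|Im λ_n|} < ∞. Let R > r and suppose there exists N > 0 such that sup over all n with |λ_n| > N of (|Im λ_n| + m_n)/ln(2 + |λ_n|) is strictly less than 1/(R − r). Then ∑_n M_n · B(R, λ_n, k−1, m_n) · (|λ_n| + 1)^{k−1} · e^{R·|Im λ_n|} < ∞. -/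
open Complex Filter

/-- The weight `B(R, λ, q, m)` from the paper (it depends only on `R`, `q`, `m`). -/
noncomputable def Bwt (R : ℝ) (_lam : ℂ) (q m : ℕ) : ℝ :=
  if R > 1 then R ^ m
  else if R = 1 then (m : ℝ) + 1
  else min ((q : ℝ) + 1) ((m : ℝ) + 1)

/-!
Lowering the exponent of `‖λ‖ + 1` by one and raising `r` to `R` multiplies the `n`-th term by at
most `(m + 1) e^{(R - r)(|Im λ| + m)} / (‖λ‖ + 1)`: indeed `max R 1 ≤ e^{R - r} max r 1`, and
`B(R, ·, ·, m)` lies between `max R 1 ^ m` and `(m + 1) max R 1 ^ m`. For large `‖λ_n‖` the growth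
condition gives `|Im λ_n| + m_n ≤ θ log x` with `x = 2 + ‖λ_n‖` and `θ (R - r) < 1`, so this factor
is at most `(θ log x + 1) x^{θ (R - r)} / (x - 1)`, which is `≤ 1` for large `x`. The new series is
therefore eventually dominated by the old one.
-/

open Asymptotics

section Bwt

variable (l : ℂ) (q m : ℕ)

lemma one_le_Bwt (R : ℝ) : 1 ≤ Bwt R l q m := by
  unfold Bwt
  split_ifs with h1
  · exact one_le_pow₀ h1.le
  · simp
  · simp

lemma max_pow_le_Bwt (r : ℝ) : max r 1 ^ m ≤ Bwt r l q m := by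
  by_cases hr : 1 < r
  · simp [Bwt, hr, max_eq_left hr.le]
  · simpa [max_eq_right (not_lt.1 hr)] using one_le_Bwt l q m r

lemma Bwt_le_succ_mul_max_pow (R : ℝ) : Bwt R l q m ≤ (m + 1) * max R 1 ^ m := by
  unfold Bwt
  split_ifs with h1 h2
  · rw [max_eq_left h1.le]
    exact le_mul_of_one_le_left (by positivity) (by simp)
  · simp [h2]
  · simp [max_eq_right (not_lt.1 h1)]

end Bwt

lemma max_one_le_exp_sub_mul_max_one {r R : ℝ} (hrR : r ≤ R) :
    max R 1 ≤ Real.exp (R - r) * max r 1 := by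
  have hexp := Real.add_one_le_exp (R - r)
  have hr₁ : 1 ≤ max r 1 := le_max_right r 1
  have hr : r ≤ max r 1 := le_max_left r 1
  refine max_le ?_ ?_ <;> nlinarith

lemma Bwt_le_succ_mul_exp_mul_Bwt {r R : ℝ} (hrR : r ≤ R) (l : ℂ) (q q' m : ℕ) :
    Bwt R l q' m ≤ (m + 1) * Real.exp ((R - r) * m) * Bwt r l q m :=
  calc Bwt R l q' m ≤ (m + 1) * max R 1 ^ m := Bwt_le_succ_mul_max_pow l q' m R
    _ ≤ (m + 1) * (Real.exp (R - r) * max r 1) ^ m := by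
        gcongr
        exact max_one_le_exp_sub_mul_max_one hrR
    _ = (m + 1) * Real.exp ((R - r) * m) * max r 1 ^ m := by
        rw [mul_pow, ← Real.exp_nat_mul, mul_comm (m : ℝ)]; ring
    _ ≤ (m + 1) * Real.exp ((R - r) * m) * Bwt r l q m := by
        gcongr; exact max_pow_le_Bwt l q m r

lemma Bwt_mul_pow_mul_exp_le {r R : ℝ} (hrR : r ≤ R) (k : ℕ) (l : ℂ) (m : ℕ)
    (h : (m + 1) * Real.exp ((R - r) * (|l.im| + m)) ≤ ‖l‖ + 1) :
    Bwt R l k m * (‖l‖ + 1) ^ k * Real.exp (R * |l.im|) ≤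
      Bwt r l (k + 1) m * (‖l‖ + 1) ^ (k + 1) * Real.exp (r * |l.im|) := by
  have hB := Bwt_le_succ_mul_exp_mul_Bwt hrR l (k + 1) k m
  have hpos : 0 ≤ Bwt r l (k + 1) m * (‖l‖ + 1) ^ k * Real.exp (r * |l.im|) := by
    have := one_le_Bwt l (k + 1) m r
    positivity
  calc Bwt R l k m * (‖l‖ + 1) ^ k * Real.exp (R * |l.im|)
      ≤ (m + 1) * Real.exp ((R - r) * m) * Bwt r l (k + 1) m * (‖l‖ + 1) ^ k *
          Real.exp (R * |l.im|) := by
        gcongr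
    _ = Bwt r l (k + 1) m * (‖l‖ + 1) ^ k * Real.exp (r * |l.im|) *
          ((m + 1) * Real.exp ((R - r) * (|l.im| + m))) := by
        rw [show R * |l.im| = (R - r) * |l.im| + r * |l.im| by ring,
          show (R - r) * (|l.im| + m) = (R - r) * m + (R - r) * |l.im| by ring,
          Real.exp_add, Real.exp_add]
        ring
    _ ≤ Bwt r l (k + 1) m * (‖l‖ + 1) ^ k * Real.exp (r * |l.im|) * (‖l‖ + 1) :=
        mul_le_mul_of_nonneg_left h hpos
    _ = Bwt r l (k + 1) m * (‖l‖ + 1) ^ (k + 1) * Real.exp (r * |l.im|) := by ring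

lemma succ_mul_exp_le_of_le_log {x δ θ s m : ℝ} (hx : 0 < x) (hδ : 0 ≤ δ) (hm₀ : 0 ≤ m)
    (hm : m ≤ s) (hs : s ≤ θ * Real.log x) :
    (m + 1) * Real.exp (δ * s) ≤ (θ * Real.log x + 1) * x ^ (θ * δ) := by
  have hexp : Real.exp (δ * s) ≤ x ^ (θ * δ) := by
    rw [Real.rpow_def_of_pos hx]
    exact Real.exp_le_exp.2 (by nlinarith)
  gcongr <;> linarith

lemma eventually_log_mul_rpow_le (θ : ℝ) {β : ℝ} (hβ : β < 1) :
    ∀ᶠ x : ℝ in atTop, (θ * Real.log x + 1) * x ^ β ≤ x - 1 := by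
  have hlog : (fun x : ℝ => θ * Real.log x + 1) =o[atTop] fun x => x ^ (1 - β) :=
    ((isLittleO_log_rpow_atTop (by linarith)).const_mul_left θ).add
      ((isLittleO_one_left_iff ℝ).2 <|
        tendsto_norm_atTop_atTop.comp (tendsto_rpow_atTop (by linarith)))
  have hlin : (fun x : ℝ => (θ * Real.log x + 1) * x ^ β) =o[atTop] fun x => x := by
    refine (hlog.mul_isBigO (isBigO_refl _ _)).congr' .rfl ?_
    filter_upwards [eventually_gt_atTop 0] with x hx
    rw [← Real.rpow_add hx, sub_add_cancel, Real.rpow_one]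
  filter_upwards [hlin.bound (by norm_num : (0 : ℝ) < 1 / 2), eventually_ge_atTop 2] with x hx h2
  rw [Real.norm_eq_abs, Real.norm_eq_abs, abs_of_nonneg (by linarith : (0 : ℝ) ≤ x)] at hx
  linarith [le_abs_self ((θ * Real.log x + 1) * x ^ β)]

lemma norm_mul_le_norm_mul_of_le {a b : ℝ} (c : ℝ) (ha : 0 ≤ a) (hab : a ≤ b) :
    ‖c * a‖ ≤ ‖c * b‖ := by
  rw [norm_mul, norm_mul, Real.norm_of_nonneg ha, Real.norm_of_nonneg (ha.trans hab)]
  gcongr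

theorem summability_transfer (r : ℝ) (k : ℕ) (hk : 1 ≤ k)
    (lam : ℕ → ℂ)
    (hlam : Tendsto (fun n => ‖lam n‖) atTop atTop)
    (m : ℕ → ℕ)
    (M : ℕ → ℝ)
    (hsum : Summable fun n =>
      M n * Bwt r (lam n) k (m n) * (‖lam n‖ + 1) ^ k *
        Real.exp (r * |(lam n).im|))
    (R : ℝ) (hR : r < R)
    (hgrow : ∃ N > (0 : ℝ), ∃ θ : ℝ, θ < 1 / (R - r) ∧
      ∀ n, ‖lam n‖ > N →
        (|(lam n).im| + (m n : ℝ)) / Real.log (2 + ‖lam n‖) ≤ θ) :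
    Summable fun n =>
      M n * Bwt R (lam n) (k - 1) (m n) * (‖lam n‖ + 1) ^ (k - 1) *
        Real.exp (R * |(lam n).im|) := by
  obtain ⟨N, -, θ, hθ, hbound⟩ := hgrow
  obtain ⟨k, rfl⟩ := Nat.exists_eq_add_of_le' hk
  have hβ : θ * (R - r) < 1 := by rwa [lt_div_iff₀ (sub_pos.2 hR)] at hθ
  have hx : Tendsto (fun n => 2 + ‖lam n‖) atTop atTop := tendsto_atTop_add_const_left _ 2 hlam
  refine hsum.norm.of_norm_bounded_eventually_nat ?_
  filter_upwards [hlam.eventually_gt_atTop N, hx.eventually (eventually_log_mul_rpow_le θ hβ)]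
    with n hN hlarge
  have hlog : |(lam n).im| + m n ≤ θ * Real.log (2 + ‖lam n‖) :=
    (div_le_iff₀ (Real.log_pos (by linarith [norm_nonneg (lam n)]))).1 (hbound n hN)
  have hterm := Bwt_mul_pow_mul_exp_le hR.le k (lam n) (m n) <| by
    calc _ ≤ _ := succ_mul_exp_le_of_le_log (by positivity) (sub_nonneg.2 hR.le)
            (Nat.cast_nonneg _) (le_add_of_nonneg_left (abs_nonneg _)) hlog
      _ ≤ _ := hlarge
      _ = _ := by ring
  have hpos : 0 ≤ Bwt R (lam n) k (m n) * (‖lam n‖ + 1) ^ k * Real.exp (R * |(lam n).im|) := by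
    have := one_le_Bwt (lam n) k (m n) R
    positivity
  simpa only [Nat.add_sub_cancel, mul_assoc] using norm_mul_le_norm_mul_of_le (M n) hpos hterm
end

section
/- Let λ ∈ ℂ, let η, j ∈ ℕ, and let r > 0. Then for every t ∈ ℝ with |t| ≤ r, the j-th derivative of the function e^{λ,η}(t) = (it)^η e^{iλt} satisfies |(d/dt)^j ((it)^η e^{iλt})| ≤ (1 + η)^j · (max{r, 1})^η · (1 + |λ|)^j · e^{r·|Im λ|}. -/
open Complex

/-- The exponential monomial `e^{λ,η}(t) = (it)^η e^{iλt}`. -/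
noncomputable def eMon (lam : ℂ) (η : ℕ) : ℝ → ℂ :=
  fun t => (Complex.I * t) ^ η * Complex.exp (Complex.I * lam * t)

/-!
`e^{λ,η}` is the restriction to `ℝ` of the entire function `z ↦ i^η z^η e^{iλz}`. By Leibniz's
rule its `j`-th derivative is `∑ₘ C(j,m) (d/dz)^m (i^η z^η) · (iλ)^{j-m} e^{iλz}`; for `|t| ≤ r`
the two factors are bounded by `η^m max(r,1)^η` and `|λ|^{j-m} e^{r|Im λ|}`, and the binomial sum
collapses to `(η + |λ|)^j ≤ (1+η)^j (1+|λ|)^j`.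
-/

open Finset

theorem iteratedDeriv_comp_ofReal {f : ℂ → ℂ} (hf : ContDiff ℂ ⊤ f) (n : ℕ) :
    iteratedDeriv n (fun t : ℝ => f t) = fun t : ℝ => iteratedDeriv n f t := by
  induction n with
  | zero => simp
  | succ n ih =>
    ext t
    rw [iteratedDeriv_succ, ih, iteratedDeriv_succ]
    exact ((hf.differentiable_iteratedDeriv n (by simp)) t).hasDerivAt.comp_ofReal.deriv

theorem norm_iteratedDeriv_mul_le_add_pow {𝕜 𝔸 : Type*} [NontriviallyNormedField 𝕜]
    [NormedRing 𝔸] [NormedAlgebra 𝕜 𝔸] [NormOneClass 𝔸] {f g : 𝕜 → 𝔸} {n : ℕ} {x : 𝕜}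
    (hf : ContDiffAt 𝕜 n f x) (hg : ContDiffAt 𝕜 n g x) {A B M N : ℝ}
    (hfx : ∀ i ≤ n, ‖iteratedDeriv i f x‖ ≤ A ^ i * M)
    (hgx : ∀ i ≤ n, ‖iteratedDeriv i g x‖ ≤ B ^ i * N) :
    ‖iteratedDeriv n (fun y => f y * g y) x‖ ≤ (A + B) ^ n * M * N := by
  rw [iteratedDeriv_fun_mul hf hg, add_pow, sum_mul, sum_mul]
  refine (norm_sum_le _ _).trans (sum_le_sum fun i hi => ?_)
  have hin : i ≤ n := Nat.lt_succ_iff.mp (mem_range.mp hi)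
  calc ‖(n.choose i : 𝔸) * iteratedDeriv i f x * iteratedDeriv (n - i) g x‖
      ≤ n.choose i * ‖iteratedDeriv i f x‖ * ‖iteratedDeriv (n - i) g x‖ := by
        refine (norm_mul_le _ _).trans ?_
        gcongr
        refine (norm_mul_le _ _).trans ?_
        gcongr
        simpa using Nat.norm_cast_le (α := 𝔸) (n.choose i)
    _ ≤ n.choose i * (A ^ i * M) * (B ^ (n - i) * N) := by
        have hM : 0 ≤ A ^ i * M := (norm_nonneg _).trans (hfx i hin)
        gcongr
        exacts [hfx i hin, hgx _ (Nat.sub_le n i)]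
    _ = A ^ i * B ^ (n - i) * n.choose i * M * N := by ring

theorem norm_iteratedDeriv_pow_le {𝕜 : Type*} [NontriviallyNormedField 𝕜] (m i : ℕ) {x : 𝕜}
    {R : ℝ} (hxR : ‖x‖ ≤ R) (hR : 1 ≤ R) :
    ‖iteratedDeriv i (· ^ m) x‖ ≤ (m : ℝ) ^ i * R ^ m := by
  rw [iteratedDeriv_pow, norm_mul, norm_pow]
  gcongr
  · calc ‖(m.descFactorial i : 𝕜)‖ ≤ m.descFactorial i := by
          simpa using Nat.norm_cast_le (α := 𝕜) (m.descFactorial i)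
      _ ≤ (m : ℝ) ^ i := by exact_mod_cast Nat.descFactorial_le_pow m i
  · calc ‖x‖ ^ (m - i) ≤ R ^ (m - i) := by gcongr
      _ ≤ R ^ m := pow_le_pow_right₀ hR (Nat.sub_le m i)

theorem norm_iteratedDeriv_cexp_const_mul (n : ℕ) (c z : ℂ) :
    ‖iteratedDeriv n (fun s => exp (c * s)) z‖ = ‖c‖ ^ n * Real.exp (c * z).re := by
  rw [iteratedDeriv_cexp_const_mul, norm_mul, norm_pow, norm_exp]

theorem eMon_deriv_bound_general (lam : ℂ) (η j : ℕ) (r : ℝ) :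
    ∀ t : ℝ, |t| ≤ r →
      ‖iteratedDeriv j (eMon lam η) t‖ ≤
        ((1 : ℝ) + η) ^ j * (max r 1) ^ η * (1 + ‖lam‖) ^ j *
          Real.exp (r * |lam.im|) := by
  intro t ht
  have hpow (i : ℕ) :
      ‖iteratedDeriv i (fun z : ℂ => I ^ η * z ^ η) t‖ ≤ η ^ i * max r 1 ^ η := by
    rw [iteratedDeriv_const_mul_field, norm_mul, norm_pow, norm_I, one_pow, one_mul]
    exact norm_iteratedDeriv_pow_le η i (by simpa using ht.trans (le_max_left r 1))
      (le_max_right r 1)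
  have hexp (i : ℕ) : ‖iteratedDeriv i (fun z : ℂ => exp (I * lam * z)) t‖ ≤
      ‖lam‖ ^ i * Real.exp (r * |lam.im|) := by
    rw [norm_iteratedDeriv_cexp_const_mul, norm_mul, norm_I, one_mul]
    gcongr
    have hre : (I * lam * t).re = -(t * lam.im) := by simp [mul_comm]
    rw [hre]
    exact (neg_le_abs _).trans (by rw [abs_mul]; gcongr)
  have hext : eMon lam η = fun t : ℝ => I ^ η * (t : ℂ) ^ η * exp (I * lam * t) := by
    ext t; simp [eMon, mul_pow]
  rw [hext, iteratedDeriv_comp_ofReal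
    (f := fun z => I ^ η * z ^ η * exp (I * lam * z)) (by fun_prop)]
  calc _ ≤ (η + ‖lam‖) ^ j * max r 1 ^ η * Real.exp (r * |lam.im|) :=
        norm_iteratedDeriv_mul_le_add_pow (by fun_prop) (by fun_prop)
          (fun i _ => hpow i) (fun i _ => hexp i)
    _ ≤ ((1 + η) * (1 + ‖lam‖)) ^ j * max r 1 ^ η * Real.exp (r * |lam.im|) := by
        gcongr; nlinarith [norm_nonneg lam, (Nat.cast_nonneg η : (0 : ℝ) ≤ η)]
    _ = _ := by rw [mul_pow]; ring

theorem eMon_deriv_bound (lam : ℂ) (η j : ℕ) (r : ℝ) (hr : 0 < r) :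
    ∀ t : ℝ, |t| ≤ r →
      ‖iteratedDeriv j (eMon lam η) t‖ ≤
        ((1 : ℝ) + η) ^ j * (max r 1) ^ η * (1 + ‖lam‖) ^ j *
          Real.exp (r * |lam.im|) :=
  eMon_deriv_bound_general lam η j r
end

section
/- Let r > 0, let k ∈ ℕ, let γ > 0, let A > 0, and let q ∈ ℕ with q < k − 2 − γ. Let λ : ℕ → ℂ be a sequence of nonzero complex numbers with |λ_n| → ∞, let m : ℕ → ℕ, let σ : ℕ → [0, ∞), and let coefficients c_{n,η} ∈ ℂ for 0 ≤ η ≤ m_n satisfy |c_{n,η}| ≤ A · σ_n · (1 + |λ_n|)^{γ − k} for all n and all 0 ≤ η ≤ m_n. Assume that ∑_n σ_n · B(r, λ_n, q + 1, m_n) · (|λ_n| + 1)^{γ − k + q + 1} · e^{r·|Im λ_n|} < ∞. Let R > r and suppose there exists N > 0 such that sup over all n with |λ_n| > N of (|Im λ_n| + m_n)/ln(2 + |λ_n|) is strictly less than 1/(R − r). Then the series ∑_n ∑_{η=0}^{m_n} c_{n,η} · e^{λ_n,η} converges in C^q[−R, R]. -/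
open Complex Filter

/-- A series of functions `∑ₙ F n` converges in `C^q[-R, R]`: for every `j ≤ q`
the series of `j`-th derivatives converges absolutely and uniformly on `[-R, R]`. -/
def ConvergesInCk (k : ℕ) (r : ℝ) (F : ℕ → ℝ → ℂ) : Prop :=
  ∀ j ≤ k,
    (∀ t ∈ Set.Icc (-r) r, Summable fun n => ‖iteratedDeriv j (F n) t‖) ∧
    TendstoUniformlyOn
      (fun N t => ∑ n ∈ Finset.range N, iteratedDeriv j (F n) t)
      (fun t => ∑' n, iteratedDeriv j (F n) t) atTop (Set.Icc (-r) r)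

/-!
On `[-R, R]` every derivative of order `j ≤ q` of the `n`-th term is bounded by
`(m + 1) (m + |λ| + 1)^q max(1, R)^m e^{R |Im λ|}` times the coefficient bound, so by the
Weierstrass M-test it suffices to sum these majorants. The growth condition
`|Im λ| + m ≤ θ log(2 + |λ|)` with `β = (R - r) θ < 1` pays for passing from `r` to `R`:
`max(1, R)^m e^{(R - r) |Im λ|} ≤ B(r, λ, q + 1, m) (2 + |λ|)^β`, and
`m + 1 = O((2 + |λ|)^{1 - β})` since `log x ≤ x^ε / ε`, so the majorant is dominated by a
multiple of `σ B (|λ| + 1)^{γ - k + q + 1} e^{r |Im λ|}`.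
-/

open Real Set

@[fun_prop]
lemma contDiff_eMon (lam : ℂ) (η : ℕ) {n : WithTop ℕ∞} : ContDiff ℝ n (eMon lam η) := by
  have : ContDiff ℝ n fun t : ℝ => (t : ℂ) := ofRealCLM.contDiff
  unfold eMon
  fun_prop

lemma hasDerivAt_eMon (lam : ℂ) (η : ℕ) (t : ℝ) :
    HasDerivAt (eMon lam η) (η * I * eMon lam (η - 1) t + I * lam * eMon lam η t) t := by
  have hpow : HasDerivAt (fun z : ℂ => (I * z) ^ η) (η * (I * t) ^ (η - 1) * I) t := by
    simpa using ((hasDerivAt_id (t : ℂ)).const_mul I).fun_pow η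
  have hexp : HasDerivAt (fun z : ℂ => exp (I * lam * z)) (exp (I * lam * t) * (I * lam)) t := by
    simpa using ((hasDerivAt_id (t : ℂ)).const_mul (I * lam)).cexp
  unfold eMon
  convert (hpow.fun_mul hexp).comp_ofReal using 1
  ring

lemma deriv_eMon (lam : ℂ) (η : ℕ) :
    deriv (eMon lam η) = fun t => η * I * eMon lam (η - 1) t + I * lam * eMon lam η t :=
  funext fun t => (hasDerivAt_eMon lam η t).deriv

lemma norm_eMon_le (lam : ℂ) (η : ℕ) (t : ℝ) :
    ‖eMon lam η t‖ ≤ max 1 |t| ^ η * Real.exp (|lam.im| * |t|) := by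
  have hre : (I * lam * t).re ≤ |lam.im| * |t| := by
    have : (I * lam * t).re = -(lam.im * t) := by simp
    rw [this, ← abs_mul]
    exact neg_le_abs _
  rw [eMon, norm_mul, norm_pow, norm_mul, norm_I, one_mul, norm_real, Real.norm_eq_abs, norm_exp]
  gcongr
  exact le_max_right _ _

lemma norm_iteratedDeriv_eMon_le (lam : ℂ) (j η : ℕ) (t : ℝ) :
    ‖iteratedDeriv j (eMon lam η) t‖ ≤
      (η + ‖lam‖) ^ j * max 1 |t| ^ η * Real.exp (|lam.im| * |t|) := by
  induction j generalizing η with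
  | zero => simpa using norm_eMon_le lam η t
  | succ j ih =>
    have hsplit : iteratedDeriv j (deriv (eMon lam η)) t = η * I *
        iteratedDeriv j (eMon lam (η - 1)) t + I * lam * iteratedDeriv j (eMon lam η) t := by
      rw [deriv_eMon, iteratedDeriv_fun_add (by fun_prop) (by fun_prop),
        iteratedDeriv_const_mul _ (contDiff_eMon _ _).contDiffAt,
        iteratedDeriv_const_mul _ (contDiff_eMon _ _).contDiffAt]
    have hprev : ‖iteratedDeriv j (eMon lam (η - 1)) t‖ ≤
        (η + ‖lam‖) ^ j * max 1 |t| ^ η * Real.exp (|lam.im| * |t|) := by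
      refine (ih (η - 1)).trans ?_
      gcongr
      · exact Nat.sub_le η 1
      · exact le_max_left _ _
      · exact Nat.sub_le η 1
    rw [iteratedDeriv_succ', hsplit]
    calc _ ≤ η * ((η + ‖lam‖) ^ j * max 1 |t| ^ η * Real.exp (|lam.im| * |t|)) +
          ‖lam‖ * ((η + ‖lam‖) ^ j * max 1 |t| ^ η * Real.exp (|lam.im| * |t|)) := by
          refine (norm_add_le _ _).trans ?_
          simp only [norm_mul, norm_I, Complex.norm_natCast, mul_one, one_mul]
          gcongr
          exact ih η
      _ = _ := by ring

lemma Bwt_pos (r : ℝ) (lam : ℂ) (p M : ℕ) : 0 < Bwt r lam p M := by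
  unfold Bwt
  split_ifs with h
  · exact pow_pos (zero_lt_one.trans h) M
  · positivity
  · exact lt_min (by positivity) (by positivity)

lemma one_le_Bwt_s9 {r : ℝ} (hr : r ≤ 1) (lam : ℂ) (p M : ℕ) : 1 ≤ Bwt r lam p M := by
  unfold Bwt
  rw [if_neg (not_lt.2 hr)]
  split_ifs
  · simp
  · exact le_min (by simp) (by simp)

lemma max_one_pow_le_Bwt_mul_exp {r R : ℝ} (hR : r < R) (lam : ℂ) (p M : ℕ) :
    max 1 R ^ M ≤ Bwt r lam p M * Real.exp ((R - r) * M) := by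
  rw [mul_comm (R - r), Real.exp_nat_mul]
  rcases lt_or_ge 1 r with hr | hr
  · rw [Bwt, if_pos hr, max_eq_right (by linarith), ← mul_pow]
    refine pow_le_pow_left₀ (by linarith) ?_ M
    calc R = r * ((R - r) / r + 1) := by field_simp; ring
      _ ≤ r * Real.exp ((R - r) / r) := by gcongr; exact add_one_le_exp _
      _ ≤ r * Real.exp (R - r) := by gcongr; exact div_le_self (by linarith) hr.le
  · calc max 1 R ^ M ≤ Real.exp (R - r) ^ M := by
          gcongr
          exact max_le (one_le_exp (by linarith)) (by linarith [add_one_le_exp (R - r)])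
      _ ≤ Bwt r lam p M * Real.exp (R - r) ^ M :=
          le_mul_of_one_le_left (by positivity) (one_le_Bwt_s9 hr lam p M)

noncomputable def expMajorant (R : ℝ) (q : ℕ) (lam : ℂ) (M : ℕ) : ℝ :=
  (M + 1) * (M + ‖lam‖ + 1) ^ q * (max 1 R ^ M * Real.exp (R * |lam.im|))

lemma expMajorant_nonneg (R : ℝ) (q : ℕ) (lam : ℂ) (M : ℕ) :
    0 ≤ expMajorant R q lam M := by
  unfold expMajorant
  positivity

lemma norm_iteratedDeriv_sum_eMon_le {R : ℝ} {j q : ℕ} (hj : j ≤ q) (lam : ℂ) {M : ℕ}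
    {c : ℕ → ℂ} {a : ℝ} (hc : ∀ η ≤ M, ‖c η‖ ≤ a) {t : ℝ}
    (ht : t ∈ Icc (-R) R) :
    ‖iteratedDeriv j (fun t => ∑ η ∈ Finset.range (M + 1), c η * eMon lam η t) t‖ ≤
      expMajorant R q lam M * a := by
  have ha : 0 ≤ a := (norm_nonneg _).trans (hc 0 M.zero_le)
  have htR : |t| ≤ R := abs_le.2 ht
  have hterm : ∀ η ∈ Finset.range (M + 1),
      ‖iteratedDeriv j (fun t => c η * eMon lam η t) t‖ ≤
      a * ((M + ‖lam‖ + 1) ^ q * (max 1 R ^ M * Real.exp (R * |lam.im|))) := by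
    intro η hη
    have hηM : η ≤ M := Nat.lt_succ_iff.1 (Finset.mem_range.1 hη)
    rw [iteratedDeriv_const_mul _ (contDiff_eMon _ _).contDiffAt, norm_mul]
    refine mul_le_mul (hc η hηM) ((norm_iteratedDeriv_eMon_le lam j η t).trans ?_)
      (norm_nonneg _) ha
    have hηM' : (η : ℝ) ≤ M := by exact_mod_cast hηM
    rw [← mul_assoc]
    gcongr ?_ * ?_ * Real.exp ?_
    · calc ((η : ℝ) + ‖lam‖) ^ j ≤ (M + ‖lam‖ + 1) ^ j :=
          pow_le_pow_left₀ (by positivity) (by linarith) j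
        _ ≤ (M + ‖lam‖ + 1) ^ q := pow_le_pow_right₀ (by linarith [norm_nonneg lam]) hj
    · calc max 1 |t| ^ η ≤ max 1 R ^ η := by gcongr
        _ ≤ max 1 R ^ M := pow_le_pow_right₀ (le_max_left 1 R) hηM
    · rw [mul_comm]
      gcongr
  rw [iteratedDeriv_fun_sum fun η _ => by fun_prop]
  refine (norm_sum_le _ _).trans ((Finset.sum_le_sum hterm).trans_eq ?_)
  rw [Finset.sum_const, Finset.card_range, nsmul_eq_mul, expMajorant]
  push_cast
  ring

lemma max_one_pow_mul_exp_le {r R θ : ℝ} (hR : r < R) (lam : ℂ) (p : ℕ) {M : ℕ}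
    (hgrow : |lam.im| + M ≤ θ * Real.log (2 + ‖lam‖)) :
    max 1 R ^ M * Real.exp (R * |lam.im|) ≤
      Bwt r lam p M * (2 + ‖lam‖) ^ ((R - r) * θ) * Real.exp (r * |lam.im|) := by
  have hshift : Real.exp ((R - r) * M) * Real.exp ((R - r) * |lam.im|) ≤
      (2 + ‖lam‖) ^ ((R - r) * θ) := by
    rw [← Real.exp_add, Real.rpow_def_of_pos (by positivity)]
    have := mul_le_mul_of_nonneg_left hgrow (sub_pos.2 hR).le
    exact Real.exp_le_exp.2 (by linarith)
  calc max 1 R ^ M * Real.exp (R * |lam.im|) =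
        max 1 R ^ M * Real.exp ((R - r) * |lam.im|) * Real.exp (r * |lam.im|) := by
        rw [mul_assoc, ← Real.exp_add]
        ring_nf
    _ ≤ Bwt r lam p M * Real.exp ((R - r) * M) * Real.exp ((R - r) * |lam.im|) *
        Real.exp (r * |lam.im|) := by
        gcongr
        exact max_one_pow_le_Bwt_mul_exp hR lam p M
    _ ≤ _ := by
        rw [mul_assoc (Bwt r lam p M)]
        have := Bwt_pos r lam p M
        gcongr

lemma add_one_le_mul_rpow_of_le_mul_log {x y θ ε : ℝ} (hx : 1 ≤ x) (hε : 0 < ε)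
    (hθ : 0 ≤ θ) (hy : y ≤ θ * Real.log x) : y + 1 ≤ (θ / ε + 1) * x ^ ε := by
  have hlog : Real.log x ≤ x ^ ε / ε := Real.log_le_rpow_div (by linarith) hε
  have hone : 1 ≤ x ^ ε := Real.one_le_rpow hx hε.le
  calc y + 1 ≤ θ * (x ^ ε / ε) + x ^ ε := by gcongr; exact hy.trans (by gcongr)
    _ = _ := by ring

lemma exists_expMajorant_le {r R θ : ℝ} (hR : r < R) (hθ : θ < 1 / (R - r)) (p q : ℕ) :
    ∃ K, ∀ (lam : ℂ) (M : ℕ), (|lam.im| + M) / Real.log (2 + ‖lam‖) ≤ θ →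
      expMajorant R q lam M ≤
        K * (Bwt r lam p M * (‖lam‖ + 1) ^ (q + 1) * Real.exp (r * |lam.im|)) := by
  set β := (R - r) * θ
  have hβ : β < 1 := by rwa [lt_div_iff₀ (sub_pos.2 hR), mul_comm] at hθ
  set ε := 1 - β
  have hε : 0 < ε := sub_pos.2 hβ
  refine ⟨2 * (θ / ε + 1) * (θ + 1) ^ q, fun lam M hgrow => ?_⟩
  set X := ‖lam‖
  have hX : 0 ≤ X := norm_nonneg lam
  have hL : 0 < Real.log (2 + X) := Real.log_pos (by linarith)
  rw [div_le_iff₀ hL] at hgrow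
  have hb : 0 ≤ |lam.im| := abs_nonneg _
  have hθ0 : 0 ≤ θ := (mul_nonneg_iff_of_pos_right hL).1 (by linarith)
  have hM : (M : ℝ) ≤ θ * Real.log (2 + X) := by linarith
  have hM1 := add_one_le_mul_rpow_of_le_mul_log (by linarith) hε hθ0 hM
  have hMX : (M : ℝ) + X + 1 ≤ (θ + 1) * (X + 1) := by
    have := Real.log_le_sub_one_of_pos (by linarith : 0 < 2 + X)
    nlinarith
  have hεβ : (2 + X) ^ ε * (2 + X) ^ β = 2 + X := by
    rw [← Real.rpow_add (by linarith), sub_add_cancel, Real.rpow_one]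
  have hB := Bwt_pos r lam p M
  calc expMajorant R q lam M ≤ ((θ / ε + 1) * (2 + X) ^ ε) * ((θ + 1) * (X + 1)) ^ q *
        (Bwt r lam p M * (2 + X) ^ β * Real.exp (r * |lam.im|)) := by
        unfold expMajorant
        gcongr ?_ * ?_ ^ q * ?_
        exact max_one_pow_mul_exp_le hR lam p hgrow
    _ = (θ / ε + 1) * (θ + 1) ^ q * Bwt r lam p M * (X + 1) ^ q * Real.exp (r * |lam.im|) *
        ((2 + X) ^ ε * (2 + X) ^ β) := by
        rw [mul_pow]
        ring
    _ ≤ (θ / ε + 1) * (θ + 1) ^ q * Bwt r lam p M * (X + 1) ^ q * Real.exp (r * |lam.im|) *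
        (2 * (X + 1)) := by
        rw [hεβ]
        gcongr
        linarith
    _ = _ := by ring

lemma convergesInCk_of_norm_iteratedDeriv_le {q : ℕ} {R : ℝ} {F : ℕ → ℝ → ℂ}
    {U : ℕ → ℝ} (hU : Summable U)
    (hFU : ∀ j ≤ q, ∀ n, ∀ t ∈ Icc (-R) R, ‖iteratedDeriv j (F n) t‖ ≤ U n) :
    ConvergesInCk q R F := fun j hj =>
  ⟨fun t ht => hU.of_nonneg_of_le (fun _ => norm_nonneg _) fun n => hFU j hj n t ht,
    tendstoUniformlyOn_tsum_nat hU fun n t ht => hFU j hj n t ht⟩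

theorem main_theorem_general (r : ℝ) (k : ℕ) (γ : ℝ)
    (A : ℝ) (q : ℕ)
    (lam : ℕ → ℂ)
    (hlam : Tendsto (fun n => ‖lam n‖) atTop atTop)
    (m : ℕ → ℕ) (σ : ℕ → ℝ) (c : ℕ → ℕ → ℂ)
    (hc : ∀ n, ∀ η ≤ m n,
      ‖c n η‖ ≤ A * σ n * (1 + ‖lam n‖) ^ (γ - (k : ℝ)))
    (hsum : Summable fun n =>
      σ n * Bwt r (lam n) (q + 1) (m n) *
        (‖lam n‖ + 1) ^ (γ - (k : ℝ) + (q : ℝ) + 1) *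
        Real.exp (r * |(lam n).im|))
    (R : ℝ) (hR : r < R)
    (hgrow : ∃ N > (0 : ℝ), ∃ θ : ℝ, θ < 1 / (R - r) ∧
      ∀ n, ‖lam n‖ > N →
        (|(lam n).im| + (m n : ℝ)) / Real.log (2 + ‖lam n‖) ≤ θ) :
    ConvergesInCk q R
      (fun n t => ∑ η ∈ Finset.range (m n + 1), c n η * eMon (lam n) η t) := by
  obtain ⟨N, -, θ, hθ, hgrowN⟩ := hgrow
  obtain ⟨K, hK⟩ := exists_expMajorant_le hR hθ (q + 1) q
  set a : ℕ → ℝ := fun n => A * σ n * (1 + ‖lam n‖) ^ (γ - k)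
  have ha : ∀ n, 0 ≤ a n := fun n => (norm_nonneg _).trans (hc n 0 (m n).zero_le)
  have hU : Summable fun n => expMajorant R q (lam n) (m n) * a n := by
    refine (hsum.mul_left (K * A)).of_norm_bounded_eventually_nat ?_
    filter_upwards [hlam.eventually_gt_atTop N] with n hn
    have hpow : (‖lam n‖ + 1) ^ (γ - k + q + 1) =
        (1 + ‖lam n‖) ^ (γ - k) * (‖lam n‖ + 1) ^ (q + 1) := by
      rw [add_comm 1, ← Real.rpow_add_natCast (by positivity), Nat.cast_succ, add_assoc]
    rw [Real.norm_of_nonneg (mul_nonneg (expMajorant_nonneg _ _ _ _) (ha n)), hpow]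
    calc _ ≤ K * (Bwt r (lam n) (q + 1) (m n) * (‖lam n‖ + 1) ^ (q + 1) *
          Real.exp (r * |(lam n).im|)) * a n := by
          gcongr
          · exact ha n
          · exact hK _ _ (hgrowN n hn)
      _ = _ := by ring
  exact convergesInCk_of_norm_iteratedDeriv_le hU fun j hj n t ht =>
    norm_iteratedDeriv_sum_eMon_le hj (lam n) (hc n) ht

theorem main_theorem (r : ℝ) (hr : 0 < r) (k : ℕ) (γ : ℝ) (hγ : 0 < γ)
    (A : ℝ) (hA : 0 < A) (q : ℕ) (hq : (q : ℝ) < (k : ℝ) - 2 - γ)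
    (lam : ℕ → ℂ) (hlam0 : ∀ n, lam n ≠ 0)
    (hlam : Tendsto (fun n => ‖lam n‖) atTop atTop)
    (m : ℕ → ℕ) (σ : ℕ → ℝ) (hσ : ∀ n, 0 ≤ σ n) (c : ℕ → ℕ → ℂ)
    (hc : ∀ n, ∀ η ≤ m n,
      ‖c n η‖ ≤ A * σ n * (1 + ‖lam n‖) ^ (γ - (k : ℝ)))
    (hsum : Summable fun n =>
      σ n * Bwt r (lam n) (q + 1) (m n) *
        (‖lam n‖ + 1) ^ (γ - (k : ℝ) + (q : ℝ) + 1) *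
        Real.exp (r * |(lam n).im|))
    (R : ℝ) (hR : r < R)
    (hgrow : ∃ N > (0 : ℝ), ∃ θ : ℝ, θ < 1 / (R - r) ∧
      ∀ n, ‖lam n‖ > N →
        (|(lam n).im| + (m n : ℝ)) / Real.log (2 + ‖lam n‖) ≤ θ) :
    ConvergesInCk q R
      (fun n t => ∑ η ∈ Finset.range (m n + 1), c n η * eMon (lam n) η t) :=
  main_theorem_general r k γ A q lam hlam m σ c hc hsum R hR hgrow
end
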